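/- Consider six qubit registers A, B, C, D, E, F in the state |Ψ_init⟩ = |Ψ⁺⟩_{AB} ⊗ |Ψ⁺⟩_{CD} ⊗ |Ψ⁺⟩_{EF}. Then for each measurement outcome a ∈ {0,1}, applying CNOT^{(B,E)}, then CNOT^{(D,E)}, then projecting register E onto |a⟩ and applying σ_X^a to register F, yields the vector (1/√2)·[ (1/2)(|0000⟩_{ABCD} + |1111⟩_{ABCD})|0⟩_F + (1/2)(|0011⟩_{ABCD} + |1100⟩_{ABCD})|1⟩_F ]. In particular, the Connection:Add operation Add^{B,D}_{E→F} on three EPR pairs stores the parity of B and D into F, simulating the classical XOR encoding of network coding. -/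

import Mathlib

open scoped TensorProduct

namespace QNC

noncomputable section

/-- The state space of `n` qubit registers: amplitudes on the computational basis. -/
abbrev QState (n : ℕ) : Type := (Fin n → Bool) → ℂ

/-- Computational basis state `|x⟩`. -/
def ket {n : ℕ} (x : Fin n → Bool) : QState n := fun y => if y = x then 1 else 0

/-- The CNOT gate with control register `c` and target register `t`. -/
def CNOTgate {n : ℕ} (c t : Fin n) : QState n →ₗ[ℂ] QState n where
  toFun ψ := fun x => ψ (Function.update x t (xor (x c) (x t)))
  map_add' _ _ := rfl
  map_smul' _ _ := rfl

/-- The Pauli `σ_X` gate on register `i`. -/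
def Xgate {n : ℕ} (i : Fin n) : QState n →ₗ[ℂ] QState n where
  toFun ψ := fun x => ψ (Function.update x i (!(x i)))
  map_add' _ _ := rfl
  map_smul' _ _ := rfl

/-- The Pauli `σ_Z` gate on register `i`. -/
def Zgate {n : ℕ} (i : Fin n) : QState n →ₗ[ℂ] QState n where
  toFun ψ := fun x => if x i then -ψ x else ψ x
  map_add' ψ φ := by funext x; by_cases h : x i <;> simp [h, neg_add] <;> ring
  map_smul' c ψ := by funext x; by_cases h : x i <;> simp [h]

/-- The Hadamard gate on register `i`. -/
def Hgate {n : ℕ} (i : Fin n) : QState n →ₗ[ℂ] QState n where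
  toFun ψ := fun x => (Real.sqrt 2 : ℂ)⁻¹ *
      (ψ (Function.update x i false) + (if x i then -1 else 1) * ψ (Function.update x i true))
  map_add' ψ φ := by funext x; simp only [Pi.add_apply]; ring
  map_smul' c ψ := by
    funext x; simp only [Pi.smul_apply, smul_eq_mul, RingHom.id_apply]; ring

/-- The computational-basis measurement map `|a⟩⟨a|_i ⊗ I` for outcome `a` on register `i`
(the measured register is kept, left in the basis state `|a⟩`, and can be disregarded). -/
def proj {n : ℕ} (i : Fin n) (a : Bool) : QState n →ₗ[ℂ] QState n where
  toFun ψ := fun x => if x i = a then ψ x else 0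
  map_add' ψ φ := by funext x; by_cases h : x i = a <;> simp [h]
  map_smul' c ψ := by funext x; by_cases h : x i = a <;> simp [h]

/-- `σ_X^a` on register `i`. -/
def Xpow {n : ℕ} (a : Bool) (i : Fin n) : QState n →ₗ[ℂ] QState n :=
  if a then Xgate i else LinearMap.id

/-- `σ_Z^a` on register `i`. -/
def Zpow {n : ℕ} (a : Bool) (i : Fin n) : QState n →ₗ[ℂ] QState n :=
  if a then Zgate i else LinearMap.id

/-- The Connection operation `Con^c_{r→t}` with measurement outcome `a`:
apply `CNOT^{(c,r)}`, project register `r` onto `|a⟩`, apply `σ_X^a` to register `t`. -/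
def Con {n : ℕ} (c r t : Fin n) (a : Bool) : QState n →ₗ[ℂ] QState n :=
  Xpow a t ∘ₗ proj r a ∘ₗ CNOTgate c r

/-- The Connection:Add operation `Add^{c₁,c₂}_{r→t}` with measurement outcome `a`:
apply `CNOT^{(c₁,r)}`, then `CNOT^{(c₂,r)}`, project `r` onto `|a⟩`, apply `σ_X^a` to `t`. -/
def AddOp {n : ℕ} (c₁ c₂ r t : Fin n) (a : Bool) : QState n →ₗ[ℂ] QState n :=
  Con c₂ r t a ∘ₗ CNOTgate c₁ r

/-- The Connection:Fanout operation `Fanout^c_{r₁→t₁, r₂→t₂}` with outcomes `a₁, a₂`. -/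
def Fanout {n : ℕ} (c r₁ t₁ r₂ t₂ : Fin n) (a₁ a₂ : Bool) : QState n →ₗ[ℂ] QState n :=
  Con c r₂ t₂ a₂ ∘ₗ Con c r₁ t₁ a₁

/-- The Removal operation `Rem_{r→t}` with measurement outcome `a`:
apply `H` to `r`, project `r` onto `|a⟩`, apply `σ_Z^a` to `t`. -/
def Rem {n : ℕ} (r t : Fin n) (a : Bool) : QState n →ₗ[ℂ] QState n :=
  Zpow a t ∘ₗ proj r a ∘ₗ Hgate r

/-- The Removal:Add operation `RemAdd_{r→t₁,t₂}` with measurement outcome `a`: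
apply `H` to `r`, project `r` onto `|a⟩`, apply `σ_Z^a` to both `t₁` and `t₂`. -/
def RemAdd {n : ℕ} (r t₁ t₂ : Fin n) (a : Bool) : QState n →ₗ[ℂ] QState n :=
  Zpow a t₂ ∘ₗ Zpow a t₁ ∘ₗ proj r a ∘ₗ Hgate r

/-!
On computational basis states the CNOT and `σ_X` gates act by permutations of bit strings.
Starting from `|b b d d f f⟩`, the two CNOTs write `b ⊕ d ⊕ f` into `E`, the projection keeps
only the term with `f = a ⊕ b ⊕ d`, and `σ_X^a` turns the bit `f` of `F` into `a ⊕ f = b ⊕ d`.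
Summing over `b, d` gives the four terms of the right-hand side.
-/

lemma ket_comp_of_involutive {n : ℕ} {σ : (Fin n → Bool) → Fin n → Bool}
    (hσ : Function.Involutive σ) (y : Fin n → Bool) : ket y ∘ σ = ket (σ y) := by
  funext x
  simp only [Function.comp_apply, ket, hσ.eq_iff]

lemma involutive_update_xor {n : ℕ} {c t : Fin n} (h : c ≠ t) :
    Function.Involutive fun x : Fin n → Bool => Function.update x t (x c ^^ x t) := by
  intro x
  simp [Function.update_of_ne h]

lemma involutive_update_not {n : ℕ} (i : Fin n) :
    Function.Involutive fun x : Fin n → Bool => Function.update x i (!x i) := by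
  intro x
  simp

lemma CNOTgate_ket {n : ℕ} {c t : Fin n} (h : c ≠ t) (y : Fin n → Bool) :
    CNOTgate c t (ket y) = ket (Function.update y t (y c ^^ y t)) :=
  ket_comp_of_involutive (involutive_update_xor h) y

lemma Xpow_ket {n : ℕ} (a : Bool) (i : Fin n) (y : Fin n → Bool) :
    Xpow a i (ket y) = ket (Function.update y i (a ^^ y i)) := by
  cases a
  · simp [Xpow]
  · rw [Bool.true_xor]
    exact ket_comp_of_involutive (involutive_update_not i) y

lemma proj_ket {n : ℕ} (i : Fin n) (a : Bool) (y : Fin n → Bool) :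
    proj i a (ket y) = if y i = a then ket y else 0 := by
  funext x
  by_cases hx : x = y
  · subst hx; split_ifs <;> simp [proj, ket, *]
  · split_ifs <;> simp [proj, ket, hx]

lemma AddOp_ket {n : ℕ} {c₁ c₂ r t : Fin n} (h₁ : c₁ ≠ r) (h₂ : c₂ ≠ r) (ht : t ≠ r)
    (a : Bool) (y : Fin n → Bool) :
    AddOp c₁ c₂ r t a (ket y) =
      if (y c₂ ^^ (y c₁ ^^ y r)) = a then
        ket (Function.update (Function.update y r a) t (a ^^ y t))
      else 0 := by
  simp only [AddOp, Con, LinearMap.comp_apply, CNOTgate_ket h₁, CNOTgate_ket h₂, proj_ket,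
    Function.update_of_ne h₂, Function.update_self, Function.update_idem]
  split_ifs with h
  · rw [Xpow_ket, h, Function.update_of_ne ht]
  · exact map_zero _

lemma sum_AddOp_ket_EPR (a b d : Bool) :
    ∑ f : Bool, AddOp (1 : Fin 6) 3 4 5 a (ket ![b, b, d, d, f, f]) =
      ket ![b, b, d, d, a, b ^^ d] := by
  have hupdate : ∀ f g : Bool, Function.update (Function.update ![b, b, d, d, f, f] 4 a) 5 g
      = ![b, b, d, d, a, g] := fun f g => by
    funext i; fin_cases i <;> rfl
  have h14 : (1 : Fin 6) ≠ 4 := by decide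
  have h34 : (3 : Fin 6) ≠ 4 := by decide
  have h54 : (5 : Fin 6) ≠ 4 := by decide
  simp only [Fintype.sum_bool, AddOp_ket h14 h34 h54, hupdate]
  cases a <;> cases b <;> cases d <;> simp

/-- **Connection:Add on three EPR pairs simulates the classical XOR encoding.**
Registers `A, B, C, D, E, F` are `0,…,5`. Applying `Add^{B,D}_{E→F}` with outcome `a` to
`|Ψ⁺⟩_{AB} ⊗ |Ψ⁺⟩_{CD} ⊗ |Ψ⁺⟩_{EF}` yields
`(1/√2)[(1/2)(|0000⟩_{ABCD} + |1111⟩_{ABCD})|0⟩_F + (1/2)(|0011⟩_{ABCD} + |1100⟩_{ABCD})|1⟩_F]`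
(with the measured register `E` left in `|a⟩`, to be disregarded). -/
theorem add_butterfly (a : Bool) :
    AddOp (1 : Fin 6) 3 4 5 a
      (((Real.sqrt 2 : ℂ)⁻¹) ^ 3 •
        ∑ b : Bool, ∑ d : Bool, ∑ f : Bool, ket ![b, b, d, d, f, f])
    = ((Real.sqrt 2 : ℂ)⁻¹) ^ 3 •
        (ket ![false, false, false, false, a, false] + ket ![true, true, true, true, a, false]
          + ket ![false, false, true, true, a, true]
          + ket ![true, true, false, false, a, true]) := by
  rw [map_smul]
  congr 1
  simp only [map_sum, sum_AddOp_ket_EPR]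
  simp only [Fintype.sum_bool, Bool.xor_self, Bool.true_xor, Bool.false_xor,
    Bool.not_false]
  abel

end

end QNC
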